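/- Let α ∈ (0, 1), p ∈ (0, 1), σ > 0, and let μ₁ ≠ μ₂ be real numbers. Let N(μ_i, σ²) denote the Gaussian probability measure on ℝ with mean μ_i and variance σ², and define CVaR_α(μ) := sup_{c ∈ ℝ} ( c − α⁻¹ ∫_ℝ max(c − z, 0) dμ(z) ). Then the CVaR of the two-component Gaussian mixture is strictly smaller than the mixture of the CVaRs: CVaR_α(p·N(μ₁, σ²) + (1 − p)·N(μ₂, σ²)) < p·CVaR_α(N(μ₁, σ²)) + (1 − p)·CVaR_α(N(μ₂, σ²)). -/

import Mathlib

open MeasureTheory ProbabilityTheory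

/-- The (left-tail) Conditional Value at Risk at level `α`, via the
Rockafellar–Uryasev formula. -/
noncomputable def CVaR (α : ℝ) (μ : Measure ℝ) : ℝ :=
  ⨆ c : ℝ, (c - α⁻¹ * ∫ z, max (c - z) 0 ∂μ)

/-!
Write `ν = N(0, σ²)`, `s(c) = 𝔼_ν[(c - Z)⁺]` and `g(c) = c - α⁻¹ s(c)`, so that `CVaR_α ν = sup g`.
Shifting the mean by `m` shifts the objective to `c ↦ m + g(c - m)`, hence the right-hand side is
`p μ₁ + (1 - p) μ₂ + sup g`, while the objective of the mixture is
`F(c) = p μ₁ + (1 - p) μ₂ + p g(c - μ₁) + (1 - p) g(c - μ₂)`.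
Since `ν` charges every open interval, `s` is strictly convex, so `g` is strictly concave and
`p g(c - μ₁) + (1 - p) g(c - μ₂) < g(c - p μ₁ - (1 - p) μ₂) ≤ sup g` for every `c`, as `μ₁ ≠ μ₂`.
For `α < 1` the objective `F` tends to `-∞` at both ends, so its supremum is attained and the
pointwise strict inequality survives taking the supremum.
-/

open Filter Set
open scoped NNReal

noncomputable def shortfall (μ : Measure ℝ) (c : ℝ) : ℝ := ∫ z, max (c - z) 0 ∂μ

noncomputable def cvarObjective (α : ℝ) (μ : Measure ℝ) (c : ℝ) : ℝ := c - α⁻¹ * shortfall μ c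

lemma CVaR_eq_iSup_cvarObjective (α : ℝ) (μ : Measure ℝ) :
    CVaR α μ = ⨆ c, cvarObjective α μ c :=
  rfl

lemma shortfall_nonneg (μ : Measure ℝ) (c : ℝ) : 0 ≤ shortfall μ c :=
  integral_nonneg fun _ ↦ le_max_right _ _

lemma shortfall_map_add_const (μ : Measure ℝ) (m c : ℝ) :
    shortfall (μ.map (· + m)) c = shortfall μ (c - m) := by
  rw [shortfall, integral_map (measurable_add_const m).aemeasurable (by fun_prop)]
  simp only [shortfall, sub_add_eq_sub_sub_swap]

lemma cvarObjective_map_add_const (α : ℝ) (μ : Measure ℝ) (m c : ℝ) :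
    cvarObjective α (μ.map (· + m)) c = m + cvarObjective α μ (c - m) := by
  rw [cvarObjective, cvarObjective, shortfall_map_add_const]
  ring

lemma CVaR_map_add_const {α : ℝ} {μ : Measure ℝ} (hμ : BddAbove (range (cvarObjective α μ)))
    (m : ℝ) : CVaR α (μ.map (· + m)) = m + CVaR α μ := by
  simp only [CVaR_eq_iSup_cvarObjective, cvarObjective_map_add_const]
  rw [← (Equiv.addRight m).iSup_comp]
  simp only [Equiv.coe_addRight, add_sub_cancel_right]
  exact ((OrderIso.addLeft m).map_ciSup hμ).symm

lemma shortfall_add_smul_measure {μ₁ μ₂ : Measure ℝ} {p q : ℝ} (hp : 0 ≤ p) (hq : 0 ≤ q) {c : ℝ}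
    (h₁ : Integrable (fun z ↦ max (c - z) 0) μ₁) (h₂ : Integrable (fun z ↦ max (c - z) 0) μ₂) :
    shortfall (ENNReal.ofReal p • μ₁ + ENNReal.ofReal q • μ₂) c =
      p * shortfall μ₁ c + q * shortfall μ₂ c := by
  rw [shortfall, integral_add_measure (h₁.smul_measure ENNReal.ofReal_ne_top)
    (h₂.smul_measure ENNReal.ofReal_ne_top), integral_smul_measure, integral_smul_measure,
    ENNReal.toReal_ofReal hp, ENNReal.toReal_ofReal hq, smul_eq_mul, smul_eq_mul, shortfall,
    shortfall]

section ProbabilityMeasure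

variable {μ : Measure ℝ} [IsProbabilityMeasure μ]

lemma integrable_max_sub_zero (hμ : Integrable id μ) (c : ℝ) :
    Integrable (fun z ↦ max (c - z) 0) μ :=
  ((integrable_const c).sub hμ).pos_part

lemma integrable_id_map_add_const (hμ : Integrable id μ) (m : ℝ) : Integrable id (μ.map (· + m)) :=
  (integrable_map_measure aestronglyMeasurable_id (measurable_add_const m).aemeasurable).2
    (hμ.add (integrable_const m))

lemma sub_integral_id_le_shortfall (hμ : Integrable id μ) (c : ℝ) :
    c - ∫ z, z ∂μ ≤ shortfall μ c := by
  have h := integral_mono (f := fun z ↦ c - z) ((integrable_const c).sub hμ)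
    (integrable_max_sub_zero hμ c) fun z ↦ le_max_left (c - z) 0
  rwa [integral_sub (g := fun z ↦ z) (integrable_const c) hμ, integral_const, probReal_univ,
    one_smul] at h

lemma lipschitzWith_shortfall (hμ : Integrable id μ) : LipschitzWith 1 (shortfall μ) := by
  refine LipschitzWith.of_dist_le_mul fun c d ↦ ?_
  rw [NNReal.coe_one, one_mul, dist_eq_norm, shortfall, shortfall,
    ← integral_sub (integrable_max_sub_zero hμ c) (integrable_max_sub_zero hμ d)]
  refine (norm_integral_le_of_norm_le_const (Eventually.of_forall fun z ↦ ?_)).trans_eq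
    (by rw [probReal_univ, mul_one, Real.dist_eq])
  simpa only [Real.norm_eq_abs, sub_sub_sub_cancel_right] using
    abs_max_sub_max_le_abs (c - z) (d - z) 0

lemma continuous_cvarObjective (α : ℝ) (hμ : Integrable id μ) :
    Continuous (cvarObjective α μ) :=
  continuous_id.sub (continuous_const.mul (lipschitzWith_shortfall hμ).continuous)

lemma cvarObjective_le_integral_id {α : ℝ} (hα₀ : 0 < α) (hα₁ : α ≤ 1) (hμ : Integrable id μ)
    (c : ℝ) : cvarObjective α μ c ≤ ∫ z, z ∂μ := by
  have hα : 1 ≤ α⁻¹ := one_le_inv₀ hα₀ |>.2 hα₁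
  have h₀ := shortfall_nonneg μ c
  have h₁ := sub_integral_id_le_shortfall hμ c
  rw [cvarObjective]
  rcases le_total c (∫ z, z ∂μ) with h | h <;> nlinarith

lemma bddAbove_range_cvarObjective {α : ℝ} (hα₀ : 0 < α) (hα₁ : α ≤ 1) (hμ : Integrable id μ) :
    BddAbove (range (cvarObjective α μ)) :=
  ⟨_, forall_mem_range.2 (cvarObjective_le_integral_id hα₀ hα₁ hμ)⟩

lemma tendsto_cvarObjective_cocompact {α : ℝ} (hα₀ : 0 < α) (hα₁ : α < 1)
    (hμ : Integrable id μ) : Tendsto (cvarObjective α μ) (cocompact ℝ) atBot := by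
  have hα : 1 - α⁻¹ < 0 := sub_neg.2 (one_lt_inv₀ hα₀ |>.2 hα₁)
  rw [cocompact_eq_atBot_atTop, tendsto_sup]
  constructor
  · refine tendsto_atBot_mono (fun c ↦ ?_) tendsto_id
    have := mul_nonneg (inv_nonneg.2 hα₀.le) (shortfall_nonneg μ c)
    rw [cvarObjective, id]
    linarith
  · refine tendsto_atBot_mono (fun c ↦ ?_) (tendsto_atBot_add_const_right _ (α⁻¹ * ∫ z, z ∂μ)
      (tendsto_id.const_mul_atTop_of_neg hα))
    have := mul_le_mul_of_nonneg_left (sub_integral_id_le_shortfall hμ c) (inv_nonneg.2 hα₀.le)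
    rw [cvarObjective, id]
    linarith

lemma strictConvexOn_shortfall [Measure.IsOpenPosMeasure μ] (hμ : Integrable id μ) :
    StrictConvexOn ℝ univ (shortfall μ) := by
  refine ⟨convex_univ, fun x _ y _ hxy a b ha hb hab ↦ ?_⟩
  wlog hlt : x < y generalizing x y a b
  · have := this y trivial x trivial hxy.symm b a hb ha (by linarith)
      (lt_of_le_of_ne (not_lt.1 hlt) hxy.symm)
    rwa [add_comm (b • y), add_comm (b • shortfall μ y)] at this
  simp only [smul_eq_mul]
  set m := a * x + b * y with hm
  have hxm : x < m := by linear_combination mul_pos hb (sub_pos.2 hlt) + hm - x * hab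
  have hmy : m < y := by linear_combination mul_pos ha (sub_pos.2 hlt) - hm + y * hab
  -- `D ≥ 0` is the convexity of `t ↦ max t 0`; it is strict exactly where `x < z < m`.
  set D : ℝ → ℝ := fun z ↦ a * max (x - z) 0 + b * max (y - z) 0 - max (m - z) 0
  have hD_nonneg : 0 ≤ D := fun z ↦ by
    refine sub_nonneg.2 (max_le ?_ ?_)
    · calc m - z = a * (x - z) + b * (y - z) := by linear_combination hm + z * hab
        _ ≤ a * max (x - z) 0 + b * max (y - z) 0 :=
          add_le_add (mul_le_mul_of_nonneg_left (le_max_left _ _) ha.le)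
            (mul_le_mul_of_nonneg_left (le_max_left _ _) hb.le)
    · exact add_nonneg (mul_nonneg ha.le (le_max_right _ _)) (mul_nonneg hb.le (le_max_right _ _))
  have hD_pos : Ioo x m ⊆ Function.support D := fun z ⟨hxz, hzm⟩ ↦ by
    have hD : D z = a * (z - x) := by
      simp only [D, max_eq_right (sub_nonpos.2 hxz.le), max_eq_left (sub_nonneg.2 hzm.le),
        max_eq_left (sub_nonneg.2 (hzm.trans hmy).le)]
      linear_combination -hm - z * hab
    exact (hD ▸ mul_pos ha (sub_pos.2 hxz)).ne'
  have hx := (integrable_max_sub_zero hμ x).const_mul a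
  have hy := (integrable_max_sub_zero hμ y).const_mul b
  have hD_int : Integrable D μ := (hx.add hy).sub (integrable_max_sub_zero hμ m)
  have hD_integral : ∫ z, D z ∂μ = a * shortfall μ x + b * shortfall μ y - shortfall μ m := by
    rw [integral_sub (f := fun z ↦ a * max (x - z) 0 + b * max (y - z) 0) (hx.add hy)
      (integrable_max_sub_zero hμ m), integral_add hx hy, integral_const_mul, integral_const_mul]
    rfl
  have h := (integral_pos_iff_support_of_nonneg hD_nonneg hD_int).2
    ((isOpen_Ioo.measure_pos μ (nonempty_Ioo.2 hxm)).trans_le (measure_mono hD_pos))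
  linarith

lemma strictConcaveOn_cvarObjective [Measure.IsOpenPosMeasure μ] {α : ℝ} (hα : 0 < α)
    (hμ : Integrable id μ) : StrictConcaveOn ℝ univ (cvarObjective α μ) := by
  refine ⟨convex_univ, fun x _ y _ hxy a b ha hb hab ↦ ?_⟩
  have h := mul_lt_mul_of_pos_left
    ((strictConvexOn_shortfall hμ).2 trivial trivial hxy ha hb hab) (inv_pos.2 hα)
  simp only [cvarObjective, smul_eq_mul] at h ⊢
  linarith

end ProbabilityMeasure

lemma cvarObjective_add_smul_measure {α p : ℝ} {μ₁ μ₂ : Measure ℝ} (hp₀ : 0 ≤ p) (hp₁ : p ≤ 1)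
    {c : ℝ} (h₁ : Integrable (fun z ↦ max (c - z) 0) μ₁)
    (h₂ : Integrable (fun z ↦ max (c - z) 0) μ₂) :
    cvarObjective α (ENNReal.ofReal p • μ₁ + ENNReal.ofReal (1 - p) • μ₂) c =
      p * cvarObjective α μ₁ c + (1 - p) * cvarObjective α μ₂ c := by
  rw [cvarObjective, shortfall_add_smul_measure hp₀ (sub_nonneg.2 hp₁) h₁ h₂, cvarObjective,
    cvarObjective]
  ring

theorem CVaR_mixture_map_add_const_lt {ν : Measure ℝ} [IsProbabilityMeasure ν]
    [Measure.IsOpenPosMeasure ν] (hν : Integrable id ν) {α p : ℝ}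
    (hα : α ∈ Ioo 0 1) (hp : p ∈ Ioo 0 1) {m₁ m₂ : ℝ} (hne : m₁ ≠ m₂) :
    CVaR α (ENNReal.ofReal p • ν.map (· + m₁) + ENNReal.ofReal (1 - p) • ν.map (· + m₂)) <
      p * CVaR α (ν.map (· + m₁)) + (1 - p) * CVaR α (ν.map (· + m₂)) := by
  obtain ⟨hα₀, hα₁⟩ := hα
  obtain ⟨hp₀, hp₁⟩ := hp
  have : IsProbabilityMeasure (ν.map (· + m₁)) :=
    Measure.isProbabilityMeasure_map (measurable_add_const m₁).aemeasurable
  have : IsProbabilityMeasure (ν.map (· + m₂)) :=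
    Measure.isProbabilityMeasure_map (measurable_add_const m₂).aemeasurable
  have hν₁ := integrable_id_map_add_const hν m₁
  have hν₂ := integrable_id_map_add_const hν m₂
  set F := fun c ↦ p * cvarObjective α (ν.map (· + m₁)) c +
    (1 - p) * cvarObjective α (ν.map (· + m₂)) c
  have hF : cvarObjective α (ENNReal.ofReal p • ν.map (· + m₁) +
      ENNReal.ofReal (1 - p) • ν.map (· + m₂)) = F := funext fun c ↦
    cvarObjective_add_smul_measure hp₀.le hp₁.le (integrable_max_sub_zero hν₁ c)
      (integrable_max_sub_zero hν₂ c)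
  obtain ⟨c₀, hc₀⟩ : ∃ c₀, ∀ c, F c ≤ F c₀ :=
    (((continuous_cvarObjective α hν₁).const_mul p).add
      ((continuous_cvarObjective α hν₂).const_mul (1 - p))).exists_forall_ge
    (((tendsto_cvarObjective_cocompact hα₀ hα₁ hν₁).const_mul_atBot hp₀).atBot_add_atBot
      ((tendsto_cvarObjective_cocompact hα₀ hα₁ hν₂).const_mul_atBot (sub_pos.2 hp₁)))
  have hmix : CVaR α (ENNReal.ofReal p • ν.map (· + m₁) +
      ENNReal.ofReal (1 - p) • ν.map (· + m₂)) = F c₀ := by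
    rw [CVaR_eq_iSup_cvarObjective, hF]
    exact le_antisymm (ciSup_le hc₀) (le_ciSup ⟨F c₀, forall_mem_range.2 hc₀⟩ c₀)
  have hbdd := bddAbove_range_cvarObjective hα₀ hα₁.le hν
  have hgap : p * cvarObjective α ν (c₀ - m₁) + (1 - p) * cvarObjective α ν (c₀ - m₂) <
      CVaR α ν :=
    ((strictConcaveOn_cvarObjective hα₀ hν).2 trivial trivial (sub_right_injective.ne hne)
      hp₀ (sub_pos.2 hp₁) (add_sub_cancel p 1)).trans_le (le_ciSup hbdd _)
  rw [hmix, CVaR_map_add_const hbdd, CVaR_map_add_const hbdd]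
  simp only [F, cvarObjective_map_add_const]
  linarith

/-- For a two-component Gaussian mixture with distinct means, the CVaR of the
mixture is strictly smaller than the mixture of the CVaRs: the additive CVaR
estimate strictly underestimates the total CVaR risk. -/
theorem cvar_gaussian_mixture_lt
    (α : ℝ) (hα : α ∈ Set.Ioo (0 : ℝ) 1)
    (p : ℝ) (hp : p ∈ Set.Ioo (0 : ℝ) 1)
    (σ : ℝ) (hσ : 0 < σ)
    (μ₁ μ₂ : ℝ) (hne : μ₁ ≠ μ₂) :
    CVaR α (ENNReal.ofReal p • gaussianReal μ₁ ⟨σ ^ 2, sq_nonneg σ⟩ +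
        ENNReal.ofReal (1 - p) • gaussianReal μ₂ ⟨σ ^ 2, sq_nonneg σ⟩) <
      p * CVaR α (gaussianReal μ₁ ⟨σ ^ 2, sq_nonneg σ⟩) +
        (1 - p) * CVaR α (gaussianReal μ₂ ⟨σ ^ 2, sq_nonneg σ⟩) := by
  set v : ℝ≥0 := ⟨σ ^ 2, sq_nonneg σ⟩
  have hv : v ≠ 0 := by
    rw [ne_eq, ← NNReal.coe_eq_zero]
    exact pow_ne_zero 2 hσ.ne'
  have : (gaussianReal 0 v).IsOpenPosMeasure :=
    (gaussianReal_absolutelyContinuous' 0 hv).isOpenPosMeasure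
  have hmap (m : ℝ) : gaussianReal m v = (gaussianReal 0 v).map (· + m) := by
    rw [gaussianReal_map_add_const, zero_add]
  rw [hmap μ₁, hmap μ₂]
  exact CVaR_mixture_map_add_const_lt IsGaussian.integrable_id hα hp hne
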